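/- Let (M, γ) be a topological group with subgroups X and G such that algebraically M is the internal semidirect product X ⋊ G (i.e., X is normal in M, X ∩ G = {e}, and XG = M), and assume that X with the subspace topology γ|_X is compact. Endow G with the topology γ/X obtained by identifying G with the coset space M/X (with its quotient topology) via the canonical projection. Then the conjugation action α : (G, γ/X) × (X, γ|_X) → (X, γ|_X), α(g, x) = g x g⁻¹, is continuous at the point (e_G, e_X). -/

import Mathlib

open scoped Topology

/-!
Write `g ∈ G` near `1` in `γ/X` as `g = n * k` with `n` near `1` in `M` and `k ∈ X`. Then
`g v g⁻¹ = n (k v k⁻¹) n⁻¹`, and by compactness of `X` the inner conjugate `k v k⁻¹` is small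
uniformly in `k ∈ X` once `v` is close to `1`.
-/

open Filter Set

section

variable {M : Type*} [Group M] [TopologicalSpace M] [IsTopologicalGroup M]

theorem IsCompact.eventually_forall_conj_mul_mem {K : Set M} (hK : IsCompact K) {W : Set M}
    (hW : W ∈ 𝓝 1) :
    ∀ᶠ p : M × M in 𝓝 (1, 1), ∀ k ∈ K, p.1 * k * p.2 * (p.1 * k)⁻¹ ∈ W := by
  refine hK.eventually_forall_of_forall_eventually fun k _ => ?_
  have hcont : Continuous fun z : (M × M) × M => z.1.1 * z.2 * z.1.2 * (z.1.1 * z.2)⁻¹ := by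
    fun_prop
  exact hcont.continuousAt.preimage_mem_nhds (by simpa using hW)

theorem tendsto_conj_comap_mk_nhds_one {X : Subgroup M} (hX : IsCompact (X : Set M)) :
    Tendsto (fun p : M × M => p.1 * p.2 * p.1⁻¹)
      (comap ((↑) : M → M ⧸ X) (𝓝 ((1 : M) : M ⧸ X)) ×ˢ 𝓝 1) (𝓝 1) := by
  intro W hW
  obtain ⟨S, hS, V, hV, hSV⟩ := mem_nhds_prod_iff.1 (hX.eventually_forall_conj_mul_mem hW)
  rw [QuotientGroup.nhds_eq]
  refine mem_prod_iff.2 ⟨(↑) ⁻¹' (((↑) : M → M ⧸ X) '' S),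
    preimage_mem_comap (image_mem_map hS), V, hV, ?_⟩
  rintro ⟨m, v⟩ ⟨⟨n, hn, hnm⟩, hv⟩
  simpa using hSV (mk_mem_prod hn hv) _ (QuotientGroup.eq.1 hnm)

end

theorem conjugation_continuousAt_of_compact_kernel {M : Type*}
    [Group M] [TopologicalSpace M] [IsTopologicalGroup M]
    (X G : Subgroup M) (hN : X.Normal)
    (hcpt : IsCompact (X : Set M)) :
    @ContinuousAt (↥G × ↥X) ↥X
      (@instTopologicalSpaceProd ↥G ↥X
        (TopologicalSpace.induced (fun g : ↥G => ((g : M) : M ⧸ X)) inferInstance)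
        inferInstance)
      inferInstance
      (fun p : ↥G × ↥X => (⟨(p.1 : M) * (p.2 : M) * (p.1 : M)⁻¹,
        hN.conj_mem _ p.2.2 _⟩ : ↥X))
      (1, 1) := by
  let _ : TopologicalSpace G :=
    TopologicalSpace.induced (fun g : G => ((g : M) : M ⧸ X)) inferInstance
  have hG : Tendsto ((↑) : G → M) (𝓝 1) (comap ((↑) : M → M ⧸ X) (𝓝 ((1 : M) : M ⧸ X))) := by
    rw [nhds_induced, tendsto_comap_iff]
    exact tendsto_comap
  have hX : Tendsto ((↑) : X → M) (𝓝 1) (𝓝 1) := continuous_subtype_val.tendsto' 1 1 rfl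
  refine tendsto_subtype_rng.2 ?_
  rw [nhds_prod_eq]
  simpa [Function.comp_def] using (tendsto_conj_comap_mk_nhds_one hcpt).comp (hG.prodMap hX)
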